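/- Every pseudocylinder is fully balanced: if R = D + [0,n]·v where D is a planar region with connected interior in a lattice plane with normal v ∈ {e1,e2,e3}, then for every u ∈ {e1,e2,e3} and every 2×2 lattice square Q with normal u contained in R, each of the sets R ∩ closed-u-shade(Q) and R ∩ closed-(−u)-shade(Q) contains equally many black and white unit cubes. -/

import Mathlib

open scoped BigOperators
noncomputable section

/-- Points of `ℝ³`. -/
abbrev R3 := Fin 3 → ℝ

/-- Euclidean inner product on `ℝ³`. -/
def dot (x y : R3) : ℝ := ∑ i, x i * y i

/-- Determinant of the 3×3 matrix with rows `a`, `b`, `c`. -/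
def det3 (a b c : R3) : ℝ := Matrix.det (Matrix.of ![a, b, c])

/-- The canonical basis vectors of `ℝ³`. -/
def stdR (i : Fin 3) : R3 := fun j => if j = i then 1 else 0

/-- `Φ`, the set of signed canonical basis vectors. -/
def PhiR : Set R3 := {u | ∃ i : Fin 3, u = stdR i ∨ u = -stdR i}

/-- A positively oriented basis with vectors in `Φ`. -/
def IsLatticeBasis (b1 b2 b3 : R3) : Prop :=
  b1 ∈ PhiR ∧ b2 ∈ PhiR ∧ b3 ∈ PhiR ∧ det3 b1 b2 b3 = 1

/-- The basic (closed unit) cube with least corner `q ∈ ℤ³`. -/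
def cubeSet (q : Fin 3 → ℤ) : Set R3 := {x | ∀ i, (q i : ℝ) ≤ x i ∧ x i ≤ q i + 1}

/-- The center of the basic cube with corner `q`. -/
def cubeCenter (q : Fin 3 → ℤ) : R3 := fun i => (q i : ℝ) + 1/2

/-- A basic cube is black when the coordinate sum of its corner is odd. -/
def cubeBlack (q : Fin 3 → ℤ) : Prop := Odd (q 0 + q 1 + q 2)

instance : DecidablePred cubeBlack := fun q => by unfold cubeBlack; infer_instance

/-- Color of a basic cube: `1` for black, `-1` for white. -/
def col (q : Fin 3 → ℤ) : ℤ := if cubeBlack q then 1 else -1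

/-- A region, given as a finite set of basic cubes (identified by corners),
realized as a subset of `ℝ³`. -/
def regionSet (R : Finset (Fin 3 → ℤ)) : Set R3 := ⋃ q ∈ R, cubeSet q

/-- A domino brick: two basic cubes sharing a face. -/
structure Domino where
  c1 : Fin 3 → ℤ
  c2 : Fin 3 → ℤ
  adj : (∑ i, |c1 i - c2 i|) = 1

instance : DecidableEq Domino := fun d e =>
  decidable_of_iff (d.c1 = e.c1 ∧ d.c2 = e.c2) (by cases d; cases e; simp)

/-- The two cubes of a domino. -/
def Domino.cubes (d : Domino) : Finset (Fin 3 → ℤ) := {d.c1, d.c2}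

/-- The domino as a subset of `ℝ³`. -/
def Domino.toSet (d : Domino) : Set R3 := cubeSet d.c1 ∪ cubeSet d.c2

/-- `v(d)`: the center of the black cube minus the center of the white cube. -/
def Domino.v (d : Domino) : R3 :=
  if cubeBlack d.c1 then (fun i => (d.c1 i : ℝ) - d.c2 i) else (fun i => (d.c2 i : ℝ) - d.c1 i)

/-- Two dominoes are the same up to the (irrelevant) ordering of their cubes. -/
def Domino.same (d e : Domino) : Prop :=
  (d.c1 = e.c1 ∧ d.c2 = e.c2) ∨ (d.c1 = e.c2 ∧ d.c2 = e.c1)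

/-- The open `u`-shade of a set `X ⊆ ℝ³`. -/
def shade (u : R3) (X : Set R3) : Set R3 :=
  interior ({y | ∃ x ∈ X, ∃ s : ℝ, 0 ≤ s ∧ y = x + s • u} \ X)

/-- The effect of the domino `d0` on the domino `d1` along `u`. -/
def tau (u : R3) (d0 d1 : Domino) : ℝ :=
  open scoped Classical in
  if (d1.toSet ∩ shade u d0.toSet).Nonempty then (1/4) * det3 d1.v d0.v u else 0

/-- The `u`-pretwist of a (finite set of) dominoes. -/
def T (u : R3) (t : Finset Domino) : ℝ := ∑ d0 ∈ t, ∑ d1 ∈ t, tau u d0 d1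

/-- `t` is a tiling of the region `R`: every domino lies in `R` and every cube
of `R` is covered by exactly one domino of `t`. -/
def IsTiling (R : Finset (Fin 3 → ℤ)) (t : Finset Domino) : Prop :=
  (∀ d ∈ t, d.c1 ∈ R ∧ d.c2 ∈ R) ∧
  ∀ q ∈ R, ∃! d, d ∈ t ∧ (q = d.c1 ∨ q = d.c2)

/-- Translation of a domino by an integer vector. -/
def Domino.translate (d : Domino) (b : Fin 3 → ℤ) : Domino :=
  ⟨fun i => d.c1 i + b i, fun i => d.c2 i + b i, by
    have h : ∀ i : Fin 3, |d.c1 i + b i - (d.c2 i + b i)| = |d.c1 i - d.c2 i| := by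
      intro i; ring_nf
    rw [Finset.sum_congr rfl fun i _ => h i]; exact d.adj⟩

/-- Reflection of a cube in the hyperplane `x_k = 0`. -/
def reflCube (k : Fin 3) (q : Fin 3 → ℤ) : Fin 3 → ℤ :=
  fun i => if i = k then -q i - 1 else q i

/-- Reflection of a domino in the hyperplane `x_k = 0`. -/
def Domino.reflect (d : Domino) (k : Fin 3) : Domino :=
  ⟨reflCube k d.c1, reflCube k d.c2, by
    have h : ∀ i : Fin 3, |reflCube k d.c1 i - reflCube k d.c2 i| = |d.c1 i - d.c2 i| := by
      intro i
      by_cases hik : i = k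
      · simp only [reflCube, if_pos hik]
        have h2 : -d.c1 i - 1 - (-d.c2 i - 1) = -(d.c1 i - d.c2 i) := by ring
        rw [h2, abs_neg]
      · simp [reflCube, hik]
    rw [Finset.sum_congr rfl fun i _ => h i]; exact d.adj⟩

/-- A signed-permutation rotation applied to a basic cube (acting on centers by
`y i = ε i * x (σ i)` and recording the new least corner). -/
def rotCube (σ : Equiv.Perm (Fin 3)) (ε : Fin 3 → ℤ) (q : Fin 3 → ℤ) : Fin 3 → ℤ :=
  fun i => if ε i = 1 then q (σ i) else -q (σ i) - 1

/-- A signed-permutation rotation applied to a domino. -/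
def Domino.rot (d : Domino) (σ : Equiv.Perm (Fin 3)) (ε : Fin 3 → ℤ) : Domino :=
  ⟨rotCube σ ε d.c1, rotCube σ ε d.c2, by
    have h : ∀ i : Fin 3, |rotCube σ ε d.c1 i - rotCube σ ε d.c2 i|
        = |d.c1 (σ i) - d.c2 (σ i)| := by
      intro i
      by_cases hi : ε i = 1
      · simp [rotCube, hi]
      · simp only [rotCube, if_neg hi]
        have h2 : -d.c1 (σ i) - 1 - (-d.c2 (σ i) - 1) = -(d.c1 (σ i) - d.c2 (σ i)) := by ring
        rw [h2, abs_neg]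
    rw [Finset.sum_congr rfl fun i _ => h i]
    rw [Equiv.sum_comp σ (fun j => |d.c1 j - d.c2 j|)]
    exact d.adj⟩

/-- Auxiliary constructor for dominoes. -/
def mkDom (p q : Fin 3 → ℤ) (h : (∑ i, |p i - q i|) = 1) : Domino := ⟨p, q, h⟩

/-- The three dominoes removed by the canonical positive trit. -/
def tritPre : Fin 3 → Domino
  | 0 => mkDom ![0,0,0] ![0,0,1] (by decide)
  | 1 => mkDom ![0,1,1] ![1,1,1] (by decide)
  | 2 => mkDom ![1,0,0] ![1,1,0] (by decide)

/-- The three dominoes placed back by the canonical positive trit. -/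
def tritPost : Fin 3 → Domino
  | 0 => mkDom ![0,0,0] ![1,0,0] (by decide)
  | 1 => mkDom ![0,0,1] ![0,1,1] (by decide)
  | 2 => mkDom ![1,1,0] ![1,1,1] (by decide)

/-- `t1` is obtained from `t0` by a flip: two dominoes of `t0` occupying a
`2×2×1` slab are replaced by the two other dominoes filling the same slab. -/
def IsFlip (t0 t1 : Finset Domino) : Prop :=
  ∃ d0 d0' d1 d1' : Domino, d0 ∈ t0 ∧ d0' ∈ t0 ∧ d0 ≠ d0' ∧
    d1 ∈ t1 ∧ d1' ∈ t1 ∧ d1 ≠ d1' ∧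
    t0 \ {d0, d0'} = t1 \ {d1, d1'} ∧
    ({d0, d0'} : Finset Domino) ≠ {d1, d1'} ∧
    d0.cubes ∪ d0'.cubes = d1.cubes ∪ d1'.cubes

/-- `t1` is obtained from `t0` by a positive trit: up to an orientation preserving
lattice isometry, three dominoes of `t0` in the canonical pre-trit position are
replaced by the three dominoes in the canonical post-trit position. -/
def IsPositiveTrit (t0 t1 : Finset Domino) : Prop :=
  ∃ (σ : Equiv.Perm (Fin 3)) (ε : Fin 3 → ℤ) (b : Fin 3 → ℤ),
    (∀ i, ε i = 1 ∨ ε i = -1) ∧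
    ((∏ i, ε i) : ℤ) * (Equiv.Perm.sign σ : ℤ) = 1 ∧
    ∃ a : Fin 3 → Domino, ∃ a' : Fin 3 → Domino,
      (∀ j, a j ∈ t0) ∧ (∀ j, a' j ∈ t1) ∧
      (∀ j, (a j).same (((tritPre j).rot σ ε).translate b)) ∧
      (∀ j, (a' j).same (((tritPost j).rot σ ε).translate b)) ∧
      t0 \ {a 0, a 1, a 2} = t1 \ {a' 0, a' 1, a' 2}

/-- A cube `q` lies in the closed shade, in the direction `±e_k` (sign `sgn`),
of the 2×2 square with normal `e_k` and corner `p` (at height `p k`). -/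
def inShade (k : Fin 3) (sgn : Bool) (p q : Fin 3 → ℤ) : Prop :=
  (∀ j, j ≠ k → q j = p j ∨ q j = p j + 1) ∧ (if sgn then p k ≤ q k else q k < p k)

instance (k : Fin 3) (sgn : Bool) (p q : Fin 3 → ℤ) : Decidable (inShade k sgn p q) := by
  unfold inShade; infer_instance

/-- The 2×2 square with normal `e_k`, corner `p`, at height `p k`
is contained in the region `R`. -/
def squareInRegion (R : Finset (Fin 3 → ℤ)) (k : Fin 3) (p : Fin 3 → ℤ) : Prop :=
  ∀ q : Fin 3 → ℤ, (∀ j, j ≠ k → q j = p j ∨ q j = p j + 1) → q k = p k →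
    q ∈ R ∨ Function.update q k (p k - 1) ∈ R

/-- `R` is fully balanced with respect to the directions `±e_k`. -/
def FullyBalancedWrt (R : Finset (Fin 3 → ℤ)) (k : Fin 3) : Prop :=
  ∀ p : Fin 3 → ℤ, squareInRegion R k p →
    (∑ q ∈ R, if inShade k true p q then col q else 0) = 0 ∧
    (∑ q ∈ R, if inShade k false p q then col q else 0) = 0

/-- `R` is a pseudocylinder with axis `e_k` and depth `n`: a planar region with
connected interior, thickened `n` layers in the direction `e_k`. -/
def IsPseudocylinder (R : Finset (Fin 3 → ℤ)) (k : Fin 3) (n : ℕ) : Prop :=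
  0 < n ∧
  (∀ q ∈ R, 0 ≤ q k ∧ q k < n) ∧
  (∀ q ∈ R, ∀ m : ℤ, 0 ≤ m → m < n → Function.update q k m ∈ R) ∧
  R.Nonempty ∧
  IsConnected (interior (regionSet (R.filter (fun q => q k = 0))))

/-- A cylinder: a pseudocylinder whose base is simply connected. -/
def IsCylinder (R : Finset (Fin 3 → ℤ)) (k : Fin 3) (n : ℕ) : Prop :=
  IsPseudocylinder R k n ∧
  SimplyConnectedSpace (interior (regionSet (R.filter (fun q => q k = 0))))

/-- A (lattice) segment: the unit straight path between the centers of two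
face-adjacent basic cubes, from the center of the cube `a` to that of `b`. -/
structure Seg where
  a : Fin 3 → ℤ
  b : Fin 3 → ℤ
  adj : (∑ i, |a i - b i|) = 1

/-- The point of a segment at parameter `x ∈ [0,1]`. -/
def Seg.pt (s : Seg) (x : ℝ) : R3 := fun i => (cubeCenter s.a i) + x * ((s.b i : ℝ) - s.a i)

/-- The direction `v(ℓ) = ℓ(1) - ℓ(0)` of a segment. -/
def Seg.vec (s : Seg) : R3 := fun i => (s.b i : ℝ) - s.a i

/-- A segment lies in a region if both its cubes do. -/
def Seg.inRegion (s : Seg) (R : Finset (Fin 3 → ℤ)) : Prop := s.a ∈ R ∧ s.b ∈ R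

/-- A straight segment in `ℝ³`, with base point `p` and direction `v`. -/
structure RSeg where
  p : R3
  v : R3

/-- The point of an `RSeg` at parameter `x ∈ [0,1]`. -/
def RSeg.pt (l : RSeg) (x : ℝ) : R3 := fun i => l.p i + x * l.v i

/-- Orientation reversal of an `RSeg`. -/
def RSeg.reverse (l : RSeg) : RSeg := ⟨fun i => l.p i + l.v i, fun i => -l.v i⟩

/-- Translation of an `RSeg`. -/
def RSeg.translate (l : RSeg) (u : R3) : RSeg := ⟨fun i => l.p i + u i, l.v⟩

/-- The `RSeg` underlying a lattice segment. -/
def Seg.toR (s : Seg) : RSeg := ⟨cubeCenter s.a, s.vec⟩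

/-- The dimer of a domino: the segment from the white center to the black center. -/
def Domino.dimer (d : Domino) : RSeg :=
  if cubeBlack d.c1 then ⟨cubeCenter d.c2, d.v⟩ else ⟨cubeCenter d.c1, d.v⟩

/-- The orthogonal projection onto the plane `u^⊥`. -/
def projO (u : R3) (x : R3) : R3 := fun i => x i - (dot x u) * u i

/-- The (slanted) projection onto `b3^⊥` with kernel spanned by `b3 + a·b1 + b·b2`. -/
def projSl (b1 b2 b3 : R3) (a b : ℝ) (x : R3) : R3 :=
  fun i => x i - (dot x b3) * (b3 i + a * b1 i + b * b2 i)

/-- The effect of segment `l0` on segment `l1` along `u` (orthogonal version). -/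
def tauR (u : R3) (l0 l1 : RSeg) : ℝ :=
  open scoped Classical in
  if ((∃ x0 ∈ Set.Icc (0:ℝ) 1, ∃ x1 ∈ Set.Icc (0:ℝ) 1,
        projO u (l0.pt x0) = projO u (l1.pt x1)) ∧ dot (l0.pt 0) u < dot (l1.pt 0) u)
  then (1/4) * det3 l1.v l0.v u else 0

/-- The slanted effect `τ^β_{a,b}(l0,l1)`. -/
def tauSl (b1 b2 b3 : R3) (a b : ℝ) (l0 l1 : RSeg) : ℝ :=
  open scoped Classical in
  if ((∃ x0 ∈ Set.Icc (0:ℝ) 1, ∃ x1 ∈ Set.Icc (0:ℝ) 1,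
        projSl b1 b2 b3 a b (l0.pt x0) = projSl b1 b2 b3 a b (l1.pt x1))
      ∧ dot (l0.pt 0) b3 < dot (l1.pt 0) b3)
  then det3 l1.v l0.v b3 else 0

/-- `T^u(A,B)` summed over two finite families of segments. -/
def Tfam {n m : ℕ} (u : R3) (A : Fin n → RSeg) (B : Fin m → RSeg) : ℝ :=
  ∑ k, ∑ l, tauR u (A k) (B l)

/-- The combinatorial linking number (along `u`) of two disjoint closed curves:
half the symmetrized sum of effects. -/
def LinkAlong {n m : ℕ} (u : R3) (A : Fin n → RSeg) (B : Fin m → RSeg) : ℝ :=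
  (Tfam u A B + Tfam u B A) / 2

/-- The `u`-pretwist of a tiling, computed via dimers. -/
def Tdim (u : R3) (t : Finset Domino) : ℝ := ∑ d0 ∈ t, ∑ d1 ∈ t, tauR u d0.dimer d1.dimer

/-- A closed curve given by a cyclic list of segments. -/
def IsClosedCurve {n : ℕ} (γ : Fin n → RSeg) : Prop :=
  2 ≤ n ∧ ∀ k : Fin n,
    (γ k).pt 1 = (γ ⟨(k.val + 1) % n, Nat.mod_lt _ k.pos⟩).pt 0

/-- A closed curve is simple when its vertices are pairwise distinct. -/
def IsSimpleCurve {n : ℕ} (γ : Fin n → RSeg) : Prop :=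
  Function.Injective (fun k : Fin n => (γ k).pt 0)

/-- The (cyclically) next segment of a curve. -/
def nextSeg {n : ℕ} (hn : 0 < n) (γ : Fin n → RSeg) (k : Fin n) : RSeg :=
  γ ⟨(k.val + 1) % n, Nat.mod_lt _ hn⟩

/-- Adjacency of basic cubes. -/
def cubeAdj (p q : Fin 3 → ℤ) : Prop := (∑ i, |p i - q i|) = 1

/-- The associated graph of a region: vertices are cubes, edges join
face-adjacent cubes. -/
def cubeGraph (R : Finset (Fin 3 → ℤ)) : SimpleGraph {q // q ∈ R} where
  Adj p q := cubeAdj p.val q.val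
  symm := by
    constructor
    intro p q h
    have h : cubeAdj p.val q.val := h
    show cubeAdj q.val p.val
    unfold cubeAdj at h ⊢
    rw [Finset.sum_congr rfl fun i _ => abs_sub_comm (q.val i) (p.val i)]
    exact h
  loopless := by constructor; intro p h; simp [cubeAdj] at h

/-- The prism `G × I_m` over a graph `G`: the product of `G` with a path. -/
def prism {V : Type*} (G : SimpleGraph V) (m : ℕ) : SimpleGraph (V × Fin m) where
  Adj a b := (a.1 = b.1 ∧ (a.2.val + 1 = b.2.val ∨ b.2.val + 1 = a.2.val))
    ∨ (G.Adj a.1 b.1 ∧ a.2 = b.2)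
  symm := by
    constructor
    intro a b h
    rcases h with ⟨h1, h2⟩ | ⟨h1, h2⟩
    · exact Or.inl ⟨h1.symm, h2.symm⟩
    · exact Or.inr ⟨h1.symm, h2.symm⟩
  loopless := by
    constructor
    intro a h
    rcases h with ⟨-, h2⟩ | ⟨h1, -⟩
    · omega
    · exact G.irrefl h1

/-- The turning indicator `η` of a curve at position `k`. -/
def eta {n : ℕ} (b2 b3 : R3) (γ : Fin n → RSeg) (k : Fin n) : ℝ :=
  open scoped Classical in
  if ((γ k).v = b2 ∧ (nextSeg k.pos γ k).v = b3)
      ∨ ((γ k).v = -b3 ∧ (nextSeg k.pos γ k).v = -b2) then 1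
  else if ((γ k).v = -b2 ∧ (nextSeg k.pos γ k).v = -b3)
      ∨ ((γ k).v = b3 ∧ (nextSeg k.pos γ k).v = b2) then -1
  else 0

/-- A box: a rectangular parallelepiped of basic cubes. -/
def IsBox (B : Finset (Fin 3 → ℤ)) : Prop :=
  ∃ lo hi : Fin 3 → ℤ, (∀ i, lo i < hi i) ∧ ∀ q, q ∈ B ↔ ∀ i, lo i ≤ q i ∧ q i < hi i

/-!
Reflecting one coordinate `j ≠ u` of a cube across the middle line of the square `Q` changes the
parity of its coordinate sum, hence its colour, and keeps it in either shade of `Q`. In a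
pseudocylinder with axis `e_k` this reflection also maps the cubes of `R` in the shade back into
`R`: take `j = k` when `u ≠ k`, and any transverse `j` when `u = k`. It is therefore a
colour-reversing involution of `R ∩ shade`, so the colours cancel.
-/

/-- On corners of basic cubes, `q ↦ reflectCoord j c q` is the reflection in the plane
`x_j = (c + 1) / 2`. -/
def reflectCoord {ι : Type*} [DecidableEq ι] (j : ι) (c : ℤ) (q : ι → ℤ) : ι → ℤ :=
  Function.update q j (c - q j)

section reflectCoord

variable {ι : Type*} [DecidableEq ι] {i j : ι} {c : ℤ} {q : ι → ℤ}

@[simp]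
lemma reflectCoord_apply_self : reflectCoord j c q j = c - q j :=
  Function.update_self _ _ _

lemma reflectCoord_apply_of_ne (h : i ≠ j) : reflectCoord j c q i = q i :=
  Function.update_of_ne h _ _

@[simp]
lemma reflectCoord_reflectCoord : reflectCoord j c (reflectCoord j c q) = q := by
  simp [reflectCoord]

lemma reflectCoord_ne_self_of_odd (hc : Odd c) : reflectCoord j c q ≠ q := fun h => by
  have := congrFun h j
  rw [reflectCoord_apply_self] at this
  obtain ⟨m, rfl⟩ := hc
  omega

end reflectCoord

lemma col_reflectCoord {j : Fin 3} {c : ℤ} (hc : Odd c) (q : Fin 3 → ℤ) :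
    col (reflectCoord j c q) = -col q := by
  have hsum : ∑ i, reflectCoord j c q i + 2 * q j = ∑ i, q i + c := by
    rw [reflectCoord, Finset.sum_update_of_mem (Finset.mem_univ j),
      ← Finset.add_sum_erase _ _ (Finset.mem_univ j), Finset.sdiff_singleton_eq_erase]
    ring
  have hblack : cubeBlack (reflectCoord j c q) ↔ ¬cubeBlack q := by
    simp only [cubeBlack, ← Fin.sum_univ_three, Int.odd_iff] at hc ⊢
    omega
  by_cases hq : cubeBlack q <;> simp [col, hq, hblack]

lemma inShade_reflectCoord {u j : Fin 3} (hj : j ≠ u) {sgn : Bool} {p q : Fin 3 → ℤ}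
    (hq : inShade u sgn p q) : inShade u sgn p (reflectCoord j (2 * p j + 1) q) := by
  refine ⟨fun i hi => ?_, by rw [reflectCoord_apply_of_ne hj.symm]; exact hq.2⟩
  obtain rfl | hij := eq_or_ne i j
  · rw [reflectCoord_apply_self]
    rcases hq.1 i hi with h | h <;> omega
  · rw [reflectCoord_apply_of_ne hij]
    exact hq.1 i hi

lemma sum_col_inShade_eq_zero {R : Finset (Fin 3 → ℤ)} {u j : Fin 3} (hj : j ≠ u)
    {p : Fin 3 → ℤ} {sgn : Bool}
    (hR : ∀ q ∈ R, inShade u sgn p q → reflectCoord j (2 * p j + 1) q ∈ R) :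
    (∑ q ∈ R, if inShade u sgn p q then col q else 0) = 0 := by
  have hc : Odd (2 * p j + 1) := odd_two_mul_add_one _
  rw [← Finset.sum_filter]
  refine Finset.sum_involution (fun q _ => reflectCoord j (2 * p j + 1) q)
    (fun q _ => by rw [col_reflectCoord hc, add_neg_cancel])
    (fun q _ _ => reflectCoord_ne_self_of_odd hc) (fun q hq => ?_)
    (fun q _ => reflectCoord_reflectCoord)
  rw [Finset.mem_filter] at hq ⊢
  exact ⟨hR q hq.1 hq.2, inShade_reflectCoord hj hq.2⟩

lemma exists_update_mem_of_squareInRegion {R : Finset (Fin 3 → ℤ)} {u : Fin 3}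
    {p q : Fin 3 → ℤ} (hp : squareInRegion R u p)
    (hq : ∀ j, j ≠ u → q j = p j ∨ q j = p j + 1) : ∃ m, Function.update q u m ∈ R := by
  have hsq := hp (Function.update q u (p u))
    (fun j hj => by rw [Function.update_of_ne hj]; exact hq j hj) (Function.update_self _ _ _)
  rw [Function.update_idem] at hsq
  exact hsq.elim (⟨_, ·⟩) (⟨_, ·⟩)

namespace IsPseudocylinder

variable {R : Finset (Fin 3 → ℤ)} {k : Fin 3} {n : ℕ}

lemma mem_of_update_mem (hR : IsPseudocylinder R k n) {q : Fin 3 → ℤ} {m : ℤ}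
    (hm : Function.update q k m ∈ R) (h0 : 0 ≤ q k) (hn : q k < n) : q ∈ R := by
  simpa using hR.2.2.1 _ hm (q k) h0 hn

/-- The reflected axial coordinate stays in the two layers met by the square. -/
lemma reflectCoord_axis_mem (hR : IsPseudocylinder R k n) {u : Fin 3} (hku : k ≠ u)
    {p q : Fin 3 → ℤ} {sgn : Bool} (hp : squareInRegion R u p) (hq : q ∈ R)
    (hsh : inShade u sgn p q) : reflectCoord k (2 * p k + 1) q ∈ R := by
  obtain ⟨m, hm⟩ := exists_update_mem_of_squareInRegion hp (inShade_reflectCoord hku hsh).1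
  have hrange := hR.2.1 _ hm
  rw [Function.update_of_ne hku, reflectCoord_apply_self] at hrange
  exact hR.2.2.1 q hq _ hrange.1 hrange.2

/-- The reflected cube lies in the column of a cube of the square, and columns of `R` are
full. -/
lemma reflectCoord_transverse_mem (hR : IsPseudocylinder R k n) {j : Fin 3} (hjk : j ≠ k)
    {p q : Fin 3 → ℤ} {sgn : Bool} (hp : squareInRegion R k p) (hq : q ∈ R)
    (hsh : inShade k sgn p q) : reflectCoord j (2 * p j + 1) q ∈ R := by
  obtain ⟨m, hm⟩ := exists_update_mem_of_squareInRegion hp (inShade_reflectCoord hjk hsh).1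
  have hrange := hR.2.1 q hq
  rw [← reflectCoord_apply_of_ne hjk.symm (q := q) (c := 2 * p j + 1)] at hrange
  exact hR.mem_of_update_mem hm hrange.1 hrange.2

lemma exists_reflectCoord_mem (hR : IsPseudocylinder R k n) {u : Fin 3} {p : Fin 3 → ℤ}
    (hp : squareInRegion R u p) :
    ∃ j ≠ u, ∀ sgn, ∀ q ∈ R, inShade u sgn p q → reflectCoord j (2 * p j + 1) q ∈ R := by
  obtain rfl | hku := eq_or_ne u k
  · obtain ⟨j, hj⟩ := exists_ne u
    exact ⟨j, hj, fun _ _ hq hsh => hR.reflectCoord_transverse_mem hj hp hq hsh⟩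
  · exact ⟨k, hku.symm, fun _ _ hq hsh => hR.reflectCoord_axis_mem hku.symm hp hq hsh⟩

end IsPseudocylinder

theorem statement3 (R : Finset (Fin 3 → ℤ)) (k : Fin 3) (n : ℕ)
    (hR : IsPseudocylinder R k n) : ∀ u : Fin 3, FullyBalancedWrt R u := by
  intro u p hp
  obtain ⟨j, hju, hmem⟩ := hR.exists_reflectCoord_mem hp
  exact ⟨sum_col_inShade_eq_zero hju (hmem true), sum_col_inShade_eq_zero hju (hmem false)⟩
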